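/- arXiv:2401.13502 — 2 statements merged into one kernel-verified Lean document; each statement's English description precedes it below -/
import Mathlib

section
/- Let t_G denote the number of triangles in a tripartite graph G with parts V_1, V_2, V_3, and let U_1, ..., U_k partition V_2 ∪ V_3 such that the bipartite graph G[V_2 ∪ V_3] is ε-pseudoregular with respect to this partition with densities δ_{i,j}. Then Σ_{v ∈ V_1} Σ_{i,j ∈ [k]} δ_{i,j} · |N_2(v) ∩ U_i| · |N_3(v) ∩ U_j| ≤ t_G + ε·n²·|V_1|, where n = |V_2 ∪ V_3| and N_2(v), N_3(v) are the neighborhoods of v in V_2, V_3. -/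
/-- Number of edges between `S` and `T` (as ordered pairs). -/
def edgeCount {V : Type*} [DecidableEq V] (G : SimpleGraph V) [DecidableRel G.Adj]
    (S T : Finset V) : ℕ :=
  ((S ×ˢ T).filter fun p => G.Adj p.1 p.2).card

/-- Number of triangles `(v₁, v₂, v₃) ∈ V₁ × V₂ × V₃` with all pairs adjacent. -/
def triCount {V : Type*} [DecidableEq V] (G : SimpleGraph V) [DecidableRel G.Adj]
    (A B C : Finset V) : ℕ :=
  ((A ×ˢ B ×ˢ C).filter fun t =>
    G.Adj t.1 t.2.1 ∧ G.Adj t.1 t.2.2 ∧ G.Adj t.2.1 t.2.2).card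

lemma tri_eq_sum_edge {V : Type*} [DecidableEq V] (G : SimpleGraph V) [DecidableRel G.Adj]
    (A B C : Finset V) :
    triCount G A B C = ∑ v ∈ A, edgeCount G (B.filter (G.Adj v)) (C.filter (G.Adj v)) := by
  unfold triCount edgeCount
  rw [Finset.card_filter, Finset.sum_product]
  refine Finset.sum_congr rfl fun v hv => ?_
  rw [← Finset.filter_product, Finset.card_filter, Finset.sum_filter]
  refine Finset.sum_congr rfl fun p hp => ?_
  by_cases h1 : G.Adj v p.1 <;> by_cases h2 : G.Adj v p.2 <;> by_cases h3 : G.Adj p.1 p.2 <;>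
    simp [h1, h2, h3]

theorem pseudoregular_triangle_charge {V : Type*} [Fintype V] [DecidableEq V]
    (G : SimpleGraph V) [DecidableRel G.Adj] {k : ℕ}
    (V₁ V₂ V₃ : Finset V) (hV23 : Disjoint V₂ V₃)
    (U : Fin k → Finset V) (ε : ℝ) (n : ℕ) (hn : n = (V₂ ∪ V₃).card)
    (δ : Fin k → Fin k → ℝ)
    (hδ : ∀ i j, δ i j =
      if (U i).Nonempty ∧ (U j).Nonempty then
        (edgeCount G (U i) (U j) : ℝ) / (((U i).card : ℝ) * ((U j).card : ℝ))
      else 0)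
    (hreg : ∀ S T : Finset V, S ⊆ V₂ ∪ V₃ → T ⊆ V₂ ∪ V₃ → Disjoint S T →
      |(edgeCount G S T : ℝ) -
        ∑ i, ∑ j, δ i j * ((S ∩ U i).card : ℝ) * ((T ∩ U j).card : ℝ)| ≤ ε * n ^ 2) :
    ∑ v ∈ V₁, ∑ i, ∑ j,
        δ i j * (((V₂.filter fun u => G.Adj v u) ∩ U i).card : ℝ) *
          (((V₃.filter fun u => G.Adj v u) ∩ U j).card : ℝ) ≤
      (triCount G V₁ V₂ V₃ : ℝ) + ε * (n : ℝ) ^ 2 * (V₁.card : ℝ) := by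
  have key : ∀ v ∈ V₁,
      ∑ i, ∑ j, δ i j * (((V₂.filter fun u => G.Adj v u) ∩ U i).card : ℝ) *
          (((V₃.filter fun u => G.Adj v u) ∩ U j).card : ℝ) ≤
      (edgeCount G (V₂.filter (G.Adj v)) (V₃.filter (G.Adj v)) : ℝ) + ε * (n : ℝ) ^ 2 := by
    intro v hv
    have h := hreg (V₂.filter (G.Adj v)) (V₃.filter (G.Adj v))
      ((Finset.filter_subset _ _).trans Finset.subset_union_left)
      ((Finset.filter_subset _ _).trans Finset.subset_union_right)
      (hV23.mono (Finset.filter_subset _ _) (Finset.filter_subset _ _))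
    have h2 := (abs_le.mp h).1
    linarith
  calc ∑ v ∈ V₁, ∑ i, ∑ j,
        δ i j * (((V₂.filter fun u => G.Adj v u) ∩ U i).card : ℝ) *
          (((V₃.filter fun u => G.Adj v u) ∩ U j).card : ℝ)
      ≤ ∑ v ∈ V₁, ((edgeCount G (V₂.filter (G.Adj v)) (V₃.filter (G.Adj v)) : ℝ)
          + ε * (n : ℝ) ^ 2) := Finset.sum_le_sum key
    _ = (triCount G V₁ V₂ V₃ : ℝ) + ε * (n : ℝ) ^ 2 * (V₁.card : ℝ) := by
        rw [Finset.sum_add_distrib, Finset.sum_const, tri_eq_sum_edge]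
        push_cast
        ring
end

section
/- Let k ≥ 3 and let G = (V_1, ..., V_k, E) be a k-partite graph. Define the tripartite graph H whose three vertex parts are the sets of ⌈k/3⌉-cliques, ⌈k/3⌉- or ⌊k/3⌋-cliques appropriately chosen so parts have sizes corresponding to a partition of {1,...,k} into three groups I_1, I_2, I_3 of sizes ⌈k/3⌉ or ⌊k/3⌋: the vertices of part ℓ are the cliques of G with exactly one vertex in V_i for each i ∈ I_ℓ, and two such cliques (in different parts) are adjacent in H iff their union is a clique in G. Then G contains a k-clique (one vertex per part) if and only if H contains a triangle. -/
/-- A clique of `G` having exactly one vertex in the part `V i` for each `i ∈ I`,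
and no other vertices. These are the vertices of one part of the Nešetřil–Poljak
auxiliary tripartite graph. -/
def IsGroupClique {α : Type*} [DecidableEq α] {k : ℕ} (G : SimpleGraph α)
    (V : Fin k → Finset α) (I : Finset (Fin k)) (C : Finset α) : Prop :=
  G.IsClique ↑C ∧ C ⊆ I.biUnion V ∧ ∀ i ∈ I, (C ∩ V i).card = 1

theorem nesetril_poljak_reduction {α : Type*} [DecidableEq α] {k : ℕ} (hk : 3 ≤ k)
    (G : SimpleGraph α) (V : Fin k → Finset α)
    (hVdisj : ∀ i j, i ≠ j → Disjoint (V i) (V j))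
    (I : Fin 3 → Finset (Fin k))
    (hInonempty : ∀ ℓ, (I ℓ).Nonempty)
    (hIdisj : ∀ ℓ m, ℓ ≠ m → Disjoint (I ℓ) (I m))
    (hIcover : Finset.univ.biUnion I = (Finset.univ : Finset (Fin k))) :
    -- `G` contains a `k`-clique with one vertex per part
    (∃ f : Fin k → α, (∀ i, f i ∈ V i) ∧ ∀ i j, i ≠ j → G.Adj (f i) (f j)) ↔
      -- iff the auxiliary tripartite graph `H` contains a triangle
      (∃ C : Fin 3 → Finset α, (∀ ℓ, IsGroupClique G V (I ℓ) (C ℓ)) ∧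
        ∀ ℓ m, ℓ ≠ m → G.IsClique ↑(C ℓ ∪ C m)) := by
  constructor
  · rintro ⟨f, hfV, hfadj⟩
    have hrange : G.IsClique (Set.range f) := by
      rintro a ⟨i, rfl⟩ b ⟨j, rfl⟩ hne
      have hij : i ≠ j := fun h => hne (by rw [h])
      exact hfadj i j hij
    refine ⟨fun ℓ => (I ℓ).image f, fun ℓ => ⟨?_, ?_, ?_⟩, ?_⟩
    · refine hrange.subset ?_
      intro a ha
      simp only [Finset.coe_image, Set.mem_image, Finset.mem_coe] at ha
      obtain ⟨i, _, rfl⟩ := ha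
      exact ⟨i, rfl⟩
    · intro a ha
      simp only [Finset.mem_image] at ha
      obtain ⟨i, hi, rfl⟩ := ha
      exact Finset.mem_biUnion.mpr ⟨i, hi, hfV i⟩
    · intro i hi
      have : (I ℓ).image f ∩ V i = {f i} := by
        ext a
        simp only [Finset.mem_inter, Finset.mem_image, Finset.mem_singleton]
        constructor
        · rintro ⟨⟨j, hj, rfl⟩, haV⟩
          by_contra hne
          have hji : j ≠ i := fun h => hne (by rw [h])
          exact Finset.disjoint_left.mp (hVdisj j i hji) (hfV j) haV
        · rintro rfl
          exact ⟨⟨i, hi, rfl⟩, hfV i⟩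
      rw [this, Finset.card_singleton]
    · intro ℓ m _
      refine hrange.subset ?_
      intro a ha
      simp only [Finset.coe_union, Set.mem_union, Finset.coe_image, Set.mem_image,
        Finset.mem_coe] at ha
      rcases ha with ⟨i, _, rfl⟩ | ⟨i, _, rfl⟩ <;> exact ⟨i, rfl⟩
  · rintro ⟨C, hC, hadj⟩
    have hex : ∀ i : Fin k, ∃ ℓ, i ∈ I ℓ := by
      intro i
      have hi : i ∈ Finset.univ.biUnion I := hIcover.symm ▸ Finset.mem_univ i
      obtain ⟨ℓ, _, hℓ⟩ := Finset.mem_biUnion.mp hi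
      exact ⟨ℓ, hℓ⟩
    choose g hg using hex
    have hone : ∀ i, ∃ a, C (g i) ∩ V i = {a} := fun i =>
      Finset.card_eq_one.mp ((hC (g i)).2.2 i (hg i))
    choose f hf using hone
    have hfmem : ∀ i, f i ∈ C (g i) ∩ V i := fun i => (hf i).symm ▸ Finset.mem_singleton_self _
    have hfC : ∀ i, f i ∈ C (g i) := fun i => (Finset.mem_inter.mp (hfmem i)).1
    have hfV : ∀ i, f i ∈ V i := fun i => (Finset.mem_inter.mp (hfmem i)).2
    refine ⟨f, hfV, ?_⟩
    intro i j hij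
    have hne : f i ≠ f j := by
      intro h
      exact Finset.disjoint_left.mp (hVdisj i j hij) (hfV i) (h ▸ hfV j)
    by_cases hg' : g i = g j
    · exact (hC (g i)).1 (hfC i) (by rw [hg']; exact hfC j) hne
    · exact hadj (g i) (g j) hg' (Finset.mem_union_left _ (hfC i))
        (Finset.mem_union_right _ (hfC j)) hne
end
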